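/- arXiv:1102.2702 — 5 statements merged into one kernel-verified Lean document; each statement's English description precedes it below -/
import Mathlib

section
/- For any subset C of S_n with |C| ≥ 2, there exists a permutation l in S_n such that the minimal ℓ∞-distance of the conjugated set l C l^{-1} is at most 2, i.e., there exist distinct f, g ∈ l C l^{-1} with d_∞(f, g) ≤ 2. -/
/-!
Relabeling by `l` gives `d(l f l⁻¹, l g l⁻¹) = max_y |l (f g⁻¹ y) - l y|`, so for two distinct
codewords `f, g` it suffices to label the points so that every step of `π = f g⁻¹` changes the
label by at most `2`. Lay the cycles of `π` out in consecutive blocks of labels and traverse a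
cycle of length `k` in the zigzag order `0, 2, 4, …, …, 5, 3, 1` of its block.
-/

/-- The ℓ∞-distance on permutations of `Fin n`. -/
def dinf {n : ℕ} (f g : Equiv.Perm (Fin n)) : ℕ :=
  Finset.univ.sup fun i : Fin n => ((f i : ℤ) - (g i : ℤ)).natAbs

open Equiv MulAction Subgroup

variable {α β : Type*} {m d : ℕ}

def Equiv.Perm.StepsLE (π : Perm α) (e : α ≃ Fin m) (d : ℕ) : Prop :=
  ∀ a, ((e (π a) : ℤ) - e a).natAbs ≤ d

namespace Equiv.Perm.StepsLE

theorem of_semiconj {π : Perm α} {e : α ≃ Fin m} (h : π.StepsLE e d) (σ : β ≃ α) {π' : Perm β}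
    (hσ : ∀ b, σ (π' b) = π (σ b)) : π'.StepsLE (σ.trans e) d := fun b => by
  simpa [hσ] using h (σ b)

theorem trans_finCongr {π : Perm α} {e : α ≃ Fin m} (h : π.StepsLE e d) {m' : ℕ} (hm : m = m') :
    π.StepsLE (e.trans (finCongr hm)) d := fun a => by
  simpa using h a

theorem sumCongr {π₁ : Perm α} {π₂ : Perm β} {m₁ m₂ : ℕ} {e₁ : α ≃ Fin m₁} {e₂ : β ≃ Fin m₂}
    (h₁ : π₁.StepsLE e₁ d) (h₂ : π₂.StepsLE e₂ d) :
    (π₁.sumCongr π₂).StepsLE ((e₁.sumCongr e₂).trans finSumFinEquiv) d := by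
  rintro (a | b)
  · simpa using h₁ a
  · simpa using h₂ b

end Equiv.Perm.StepsLE

/-- Position of the `j`-th point of a `k`-cycle: even positions going up, then odd positions
coming back down, so that cyclically consecutive points are at distance at most `2`. -/
def zigzag (k j : ℕ) : ℕ := if 2 * j < k then 2 * j else 2 * (k - j) - 1

theorem zigzag_lt {k j : ℕ} (h : j < k) : zigzag k j < k := by
  unfold zigzag; split_ifs <;> omega

theorem zigzag_injOn {k i j : ℕ} (hi : i < k) (hj : j < k) (h : zigzag k i = zigzag k j) :
    i = j := by
  unfold zigzag at h; split_ifs at h <;> omega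

theorem natAbs_zigzag_succ_mod_sub_le {k j : ℕ} (h : j < k) :
    ((zigzag k ((j + 1) % k) : ℤ) - zigzag k j).natAbs ≤ 2 := by
  obtain h1 | h1 : j + 1 < k ∨ j + 1 = k := by omega
  · rw [Nat.mod_eq_of_lt h1]
    unfold zigzag; split_ifs <;> omega
  · rw [h1, Nat.mod_self]
    unfold zigzag; split_ifs <;> omega

theorem ZMod.exists_stepsLE_two_addRight_one (k : ℕ) [NeZero k] :
    ∃ e : ZMod k ≃ Fin k, (Equiv.addRight (1 : ZMod k)).StepsLE e 2 := by
  let z : ZMod k → Fin k := fun j => ⟨zigzag k j.val, zigzag_lt j.val_lt⟩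
  have hz : Function.Injective z := fun i j h =>
    ZMod.val_injective k (zigzag_injOn i.val_lt j.val_lt (Fin.mk.inj h))
  refine ⟨Equiv.ofBijective z ((Fintype.bijective_iff_injective_and_card z).2 ⟨hz, by simp⟩),
    fun j => ?_⟩
  have hval : (j + 1).val = (j.val + 1) % k := by
    rw [ZMod.val_add, ZMod.val_one_eq_one_mod, Nat.add_mod_mod]
  simpa [z, hval] using natAbs_zigzag_succ_mod_sub_le j.val_lt

theorem MulAction.orbitZPowersEquiv_generator_smul {G : Type*} [Group G] [MulAction G α] (g : G)
    (a : α) (x : orbit (zpowers g) a) :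
    orbitZPowersEquiv g a ((⟨g, mem_zpowers g⟩ : zpowers g) • x) =
      orbitZPowersEquiv g a x + 1 := by
  set φ := orbitZPowersEquiv g a
  obtain ⟨j, rfl⟩ := φ.symm.surjective x
  have : (⟨g, mem_zpowers g⟩ : zpowers g) • φ.symm j = φ.symm ((j.cast + 1 : ℤ) : ZMod _) := by
    rw [orbitZPowersEquiv_symm_apply', orbitZPowersEquiv_symm_apply, smul_smul, ← zpow_one_add,
      add_comm]
  rw [this, Equiv.apply_symm_apply, Equiv.apply_symm_apply]
  simp

theorem Equiv.Perm.exists_stepsLE_two [Fintype α] (π : Perm α) :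
    ∃ e : α ≃ Fin (Fintype.card α), π.StepsLE e 2 := by
  classical
  induction h : Fintype.card α using Nat.strong_induction_on generalizing α with
  | _ n ih =>
  subst h
  rcases isEmpty_or_nonempty α with _ | ⟨⟨a⟩⟩
  · exact ⟨Fintype.equivFin α, isEmptyElim⟩
  let s := orbit (zpowers π) a
  have hs : ∀ x, π x ∈ s ↔ x ∈ s := fun x => by
    have : orbit (zpowers π) (π x) = orbit (zpowers π) x :=
      orbit_smul (⟨π, mem_zpowers π⟩ : zpowers π) x
    rw [← orbit_eq_iff, ← orbit_eq_iff, this]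
  have : NeZero (Function.minimalPeriod (π • ·) a) := minimalPeriod_pos π a
  obtain ⟨z, hz⟩ := ZMod.exists_stepsLE_two_addRight_one (Function.minimalPeriod (π • ·) a)
  have h_orbit : (π.subtypePerm hs).StepsLE ((orbitZPowersEquiv π a).trans z) 2 :=
    hz.of_semiconj _ fun x => orbitZPowersEquiv_generator_smul π a x
  obtain ⟨eC, h_compl⟩ :=
    ih _ (Fintype.card_subtype_lt (p := (· ∉ s)) (not_not.2 (mem_orbit_self a)))
      (π.subtypePerm fun x => not_congr (hs x)) rfl
  have hcard : Function.minimalPeriod (π • ·) a + Fintype.card {x // x ∉ s} =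
      Fintype.card α := by
    rw [minimalPeriod_eq_card, ← Fintype.card_sum]
    exact Fintype.card_congr (sumCompl _)
  refine ⟨_, ((h_orbit.sumCongr h_compl).of_semiconj (sumCompl (· ∈ s)).symm
    fun x => ?_).trans_finCongr hcard⟩
  by_cases hx : x ∈ s
  · simp [sumCompl_symm_apply_of_pos, hx, (hs x).2 hx]
  · simp [sumCompl_symm_apply_of_neg, hx, mt (hs x).1 hx]

theorem dinf_conj_le_of_stepsLE {n : ℕ} {f g l : Perm (Fin n)} (h : (f * g⁻¹).StepsLE l d) :
    dinf (l * f * l⁻¹) (l * g * l⁻¹) ≤ d :=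
  Finset.sup_le fun i _ => by simpa using h (g (l⁻¹ i))

/-- Any code `C ⊆ S_n` with at least two elements can be relabeled
(conjugated) so that its minimal ℓ∞-distance is at most 2. -/
theorem exists_labeling_min_dist_le_two (n : ℕ) (C : Finset (Equiv.Perm (Fin n)))
    (hC : 2 ≤ C.card) :
    ∃ l : Equiv.Perm (Fin n), ∃ f ∈ C, ∃ g ∈ C, f ≠ g ∧
      dinf (l * f * l⁻¹) (l * g * l⁻¹) ≤ 2 := by
  obtain ⟨f, hf, g, hg, hfg⟩ := Finset.one_lt_card.mp hC
  obtain ⟨e, he⟩ := (f * g⁻¹).exists_stepsLE_two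
  exact ⟨e.trans (finCongr (Fintype.card_fin n)), f, hf, g, hg, hfg,
    dinf_conj_le_of_stepsLE (he.trans_finCongr _)⟩
end

section
/- Let C ⊆ S_n be a code and let I(C) = {g ∈ S_n : g² = ι, g ≠ ι, g = a b^{-1} for some a, b ∈ C}. Then there exists l ∈ S_n with d(l C l^{-1}) ≥ 2 if and only if there exists a Hamiltonian path v_1, v_2, ..., v_n on the vertex set [n] of the complete graph K_n such that for every g ∈ I(C), the path does not contain all the edges of E(g) = {uv : g(u) = v, u ≠ v}. -/
open Equiv

namespace Equiv.Perm

variable {n : ℕ} {σ : Perm (Fin n)}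

theorem apply_apply_eq_self_of_apply_eq_succ (hσ : ∀ k, ((σ k : ℤ) - k).natAbs ≤ 1) :
    ∀ a : Fin n, (σ a : ℤ) = a + 1 → σ (σ a) = a := by
  intro a
  induction a using WellFoundedLT.induction with
  | _ a ih =>
  intro ha
  have hb := σ.apply_symm_apply a
  have := hσ (σ.symm a)
  rw [hb] at this
  rcases (by omega : (σ.symm a : ℤ) = a + 1 ∨ (σ.symm a : ℤ) + 1 = a ∨ σ.symm a = a) with h | h | h
  · rw [← Fin.ext (by omega : (σ.symm a : ℕ) = σ a), hb]
  · have := ih (σ.symm a) (Fin.lt_def.2 (by omega)) (by omega)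
    rw [hb] at this
    omega
  · rw [h] at hb
    omega

theorem sq_eq_one_of_natAbs_sub_le_one (hσ : ∀ k, ((σ k : ℤ) - k).natAbs ≤ 1) : σ ^ 2 = 1 := by
  have hσ' : ∀ k, ((σ.symm k : ℤ) - k).natAbs ≤ 1 := fun k => by
    have := hσ (σ.symm k); rw [σ.apply_symm_apply] at this; omega
  refine Perm.ext fun k => ?_
  have := hσ k
  rw [sq, mul_apply, one_apply]
  rcases (by omega : (σ k : ℤ) = k + 1 ∨ (σ k : ℤ) + 1 = k ∨ σ k = k) with h | h | h
  · exact apply_apply_eq_self_of_apply_eq_succ hσ k h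
  · have := apply_apply_eq_self_of_apply_eq_succ (σ := σ.symm) hσ' (σ k)
      (by rw [σ.symm_apply_apply]; omega)
    rw [σ.symm_apply_apply, symm_apply_eq] at this
    exact this.symm
  · rw [h, h]

end Equiv.Perm

variable {n : ℕ}

theorem dinf_le_iff {f g : Perm (Fin n)} {k : ℕ} :
    dinf f g ≤ k ↔ ∀ i, ((f i : ℤ) - g i).natAbs ≤ k :=
  Finset.sup_le_iff.trans (by simp)

theorem dinf_mul_right (f g h : Perm (Fin n)) : dinf (f * h) (g * h) = dinf f g :=
  eq_of_forall_ge_iff fun k => by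
    simp only [dinf_le_iff, Perm.mul_apply]
    exact h.forall_congr_right (q := fun i => ((f i : ℤ) - g i).natAbs ≤ k)

theorem two_le_dinf_conj_one_iff (l g : Perm (Fin n)) :
    2 ≤ dinf (l * g * l⁻¹) 1 ↔
      (g ^ 2 = 1 → ∃ u w, g u = w ∧ u ≠ w ∧ ((l u : ℤ) - l w).natAbs ≠ 1) := by
  have hdisp : dinf (l * g * l⁻¹) 1 ≤ 1 ↔ ∀ u, ((l (g u) : ℤ) - l u).natAbs ≤ 1 := by
    rw [dinf_le_iff, ← l.forall_congr_right]
    simp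
  rw [← not_lt, Nat.lt_succ_iff, hdisp]
  constructor
  · intro hfar _
    by_contra! hadj
    refine hfar fun u => ?_
    by_cases hu : g u = u
    · simp [hu]
    · have := hadj u (g u) rfl (Ne.symm hu)
      omega
  · intro hP hnear
    have hg2 : g ^ 2 = 1 := by
      simpa only [conj_pow, conj_eq_one_iff] using
        Perm.sq_eq_one_of_natAbs_sub_le_one (dinf_le_iff.1 (hdisp.2 hnear))
    obtain ⟨u, _, rfl, hne, hfar⟩ := hP hg2
    have := hnear u
    have : (l u : ℕ) ≠ l (g u) := Fin.val_ne_of_ne (l.injective.ne hne)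
    omega

/-- `C` admits a labeling of minimal ℓ∞-distance at least 2 iff there is a
Hamiltonian path on `[n]` (an ordering `v 0, v 1, ..., v (n-1)` of all vertices)
such that for every involution `g ∈ I(C)` some edge of
`E(g) = {uv : g u = v, u ≠ v}` is missed by the path, i.e. there are `u ≠ w`
with `g u = w` whose positions along the path are not adjacent. -/
theorem labeling_dist_two_iff_hamiltonian_path (n : ℕ) (C : Finset (Equiv.Perm (Fin n))) :
    (∃ l : Equiv.Perm (Fin n),
      ∀ f ∈ C, ∀ g ∈ C, f ≠ g → 2 ≤ dinf (l * f * l⁻¹) (l * g * l⁻¹)) ↔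
    (∃ v : Equiv.Perm (Fin n),
      ∀ g : Equiv.Perm (Fin n), g ^ 2 = 1 → g ≠ 1 →
        (∃ a ∈ C, ∃ b ∈ C, g = a * b⁻¹) →
        ∃ u w : Fin n, g u = w ∧ u ≠ w ∧
          (((v.symm u : ℤ) - (v.symm w : ℤ)).natAbs ≠ 1)) := by
  have key (l f g : Perm (Fin n)) : 2 ≤ dinf (l * f * l⁻¹) (l * g * l⁻¹) ↔
      ((f * g⁻¹) ^ 2 = 1 → ∃ u w, (f * g⁻¹) u = w ∧ u ≠ w ∧ ((l u : ℤ) - l w).natAbs ≠ 1) := by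
    rw [← two_le_dinf_conj_one_iff, ← dinf_mul_right _ 1 (l * g * l⁻¹), one_mul]
    group
  constructor
  · rintro ⟨l, hl⟩
    refine ⟨l⁻¹, ?_⟩
    rintro g hg2 hg1 ⟨a, ha, b, hb, rfl⟩
    exact (key l a b).1 (hl a ha b hb fun hab => hg1 (mul_inv_eq_one.2 hab)) hg2
  · rintro ⟨v, hv⟩
    exact ⟨v⁻¹, fun f hf g hg hfg => (key _ f g).2 fun h2 =>
      hv _ h2 (mul_inv_eq_one.not.2 hfg) ⟨f, hf, g, hg, rfl⟩⟩
end

section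
/- For every n there exists a transitive cyclic subgroup C' ⊆ S_n (i.e., a relabeling of the transitive cyclic group) with minimal ℓ∞-distance d(C') ≥ n − ⌈(√(4n−3) − 1)/2⌉; combined with the upper bound, the optimal relabeling distance of a transitive cyclic group of order n is exactly n − ⌈(√(4n−3) − 1)/2⌉. -/
/-!
The value `k = ⌈(√(4n-3) - 1)/2⌉` is the least `k` with `n ≤ k(k+1) + 1`.

Lower bound: relabel the rotation `i ↦ i + 1` of `ℤ/n` so that the positions `0, …, k-1` keep
the small labels `0, …, k-1` and the positions `k, 2k-1, 3k-3, …` (gaps `k-1, k-2, …, 1`)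
receive the large labels `n-1, n-2, …`. The differences between a large and a small position
whose labels are at least `n - k` apart then run through `1, …, k(k+1)/2`, so every power `m`
with `0 < m < n` (or its inverse `n - m`) carries some small label to a large one.

Upper bound: only `k(k-1) ≤ n - 2` ordered pairs of labels are more than `n - k` apart, and in
an `n`-cycle each pair `(i, j)` is realised by exactly one of the `n - 1` nontrivial powers.
-/

/-- The ℓ∞-weight of a permutation of `Fin n`: `max_i |f i - i|`. -/
def wt {n : ℕ} (f : Equiv.Perm (Fin n)) : ℕ :=
  Finset.univ.sup fun i : Fin n => ((f i : ℤ) - (i : ℤ)).natAbs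

open Equiv Finset

section Weight

variable {n : ℕ}

theorem natAbs_sub_le_wt (g : Perm (Fin n)) (i : Fin n) : ((g i : ℤ) - i).natAbs ≤ wt g :=
  Finset.le_sup (f := fun i : Fin n => ((g i : ℤ) - i).natAbs) (mem_univ i)

theorem lt_wt_iff {g : Perm (Fin n)} {d : ℕ} :
    d < wt g ↔ ∃ i : Fin n, d < ((g i : ℤ) - i).natAbs := by
  simp [wt, Finset.lt_sup_iff]

theorem card_farPairs_le (k : ℕ) :
    #{p : Fin n × Fin n | n - k < ((p.2 : ℤ) - p.1).natAbs} ≤ k * k - k := by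
  refine (card_le_card_of_injOn (t := (range k).offDiag)
    (fun p => if p.1 < p.2 then (p.1.val, p.2.val - (n - k)) else (p.1.val - (n - k), p.2.val))
    ?_ ?_).trans (by rw [offDiag_card, card_range])
  · intro p hp
    simp only [coe_filter, mem_univ, true_and, Set.mem_ofPred_eq] at hp
    have := p.1.isLt; have := p.2.isLt
    simp only [coe_offDiag, coe_range, Set.mem_offDiag, Set.mem_Iio, Fin.lt_def]
    split_ifs <;> omega
  · rintro p hp q hq hpq
    simp only [coe_filter, mem_univ, true_and, Set.mem_ofPred_eq] at hp hq
    have := p.1.isLt; have := p.2.isLt; have := q.1.isLt; have := q.2.isLt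
    simp only [Fin.lt_def] at hpq
    ext <;> split_ifs at hpq <;> simp only [Prod.mk.injEq] at hpq <;> omega

end Weight

namespace Equiv.Perm.IsCycle

variable {n : ℕ} {f : Perm (Fin n)}

theorem orderOf_eq_of_support_eq_univ (hf : f.IsCycle) (hs : f.support = univ) :
    orderOf f = n := by
  rw [hf.orderOf, hs, card_univ, Fintype.card_fin]

theorem exists_pow_wt_le (hf : f.IsCycle) (hs : f.support = univ) {k : ℕ}
    (hk : k * k + 2 ≤ n + k) : ∃ m, 0 < m ∧ m < n ∧ wt (f ^ m) ≤ n - k := by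
  by_contra! hfar
  have hcard : #(Ico 1 n) ≤ #{p : Fin n × Fin n | n - k < ((p.2 : ℤ) - p.1).natAbs} := by
    refine card_le_card_of_forall_subsingleton (fun m p => (f ^ m) p.1 = p.2) ?_ ?_
    · intro m hm
      rw [mem_Ico] at hm
      obtain ⟨i, hi⟩ := lt_wt_iff.1 (hfar m hm.1 hm.2)
      exact ⟨(i, (f ^ m) i), by simpa using hi, rfl⟩
    · -- in an `n`-cycle a power below `n` is determined by the image of any one point
      rintro ⟨i, j⟩ - m₁ ⟨hm₁, hj₁⟩ m₂ ⟨hm₂, hj₂⟩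
      rw [mem_Ico] at hm₁ hm₂
      have hfi : f i ≠ i := Perm.mem_support.1 (hs ▸ mem_univ i)
      have hpow : f ^ m₁ = f ^ m₂ := hf.pow_eq_pow_iff.2 ⟨i, hfi, hj₁.trans hj₂.symm⟩
      exact pow_injOn_Iio_orderOf (by simp [hf.orderOf_eq_of_support_eq_univ hs, hm₁.2])
        (by simp [hf.orderOf_eq_of_support_eq_univ hs, hm₂.2]) hpow
  have hle := hcard.trans (card_farPairs_le k)
  rw [Nat.card_Ico] at hle
  have := Nat.le_mul_self k
  omega

end Equiv.Perm.IsCycle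

def anchor (k : ℕ) : ℕ → ℕ
  | 0 => k
  | t + 1 => anchor k t + (k - (t + 1))

section Anchor

variable {k : ℕ}

theorem monotone_anchor : Monotone (anchor k) :=
  monotone_nat_of_le_succ fun _ => Nat.le_add_right _ _

theorem le_anchor (t : ℕ) : k ≤ anchor k t :=
  monotone_anchor (Nat.zero_le t)

theorem strictMonoOn_anchor : StrictMonoOn (anchor k) (Set.Iio k) := by
  intro t _ t' ht' htt'
  induction htt' with
  | refl => simp only [anchor]; simp only [Set.mem_Iio] at ht'; omega
  | step _ ih =>
    simp only [Set.mem_Iio] at ht'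
    exact (ih (Set.mem_Iio.2 (by omega))).trans_le (Nat.le_add_right _ _)

theorem two_mul_anchor_add {t : ℕ} (ht : t ≤ k) :
    2 * anchor k t + t * (t + 1) = 2 * k * (t + 1) := by
  induction t with
  | zero => simp [anchor]
  | succ t ih =>
    have := ih (by omega)
    simp only [anchor]
    zify [show t + 1 ≤ k from ht] at this ⊢
    linear_combination this

theorem two_mul_anchor_pred (hk : 1 ≤ k) : 2 * anchor k (k - 1) = k * k + k := by
  have := two_mul_anchor_add (k := k) (t := k - 1) (by omega)
  obtain ⟨j, rfl⟩ : ∃ j, k = j + 1 := ⟨k - 1, by omega⟩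
  simp only [Nat.add_sub_cancel] at this ⊢
  nlinarith

theorem exists_add_eq_anchor {m : ℕ} (hm : 0 < m) :
    ∀ t, m ≤ anchor k t → ∃ a s, a + s < k ∧ a + m = anchor k s
  | 0, hmt => ⟨k - m, 0, by simp only [anchor] at hmt ⊢; omega⟩
  | t + 1, hmt => by
    by_cases hmt' : m ≤ anchor k t
    · exact exists_add_eq_anchor hm t hmt'
    · refine ⟨anchor k (t + 1) - m, t + 1, ?_⟩
      simp only [anchor] at hmt ⊢
      omega

theorem exists_anchor_of_lt {n m : ℕ} (hn : n ≤ k * k + k + 1) (hm : 0 < m) (hmn : m < n) :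
    ∃ a s, a + s < k ∧ (a + m = anchor k s ∨ anchor k s + m = a + n) := by
  have hA := two_mul_anchor_pred (k := k) (Nat.pos_of_ne_zero (by rintro rfl; omega))
  by_cases hmA : m ≤ anchor k (k - 1)
  · obtain ⟨a, s, has, h⟩ := exists_add_eq_anchor hm _ hmA
    exact ⟨a, s, has, .inl h⟩
  · obtain ⟨a, s, has, h⟩ :=
      exists_add_eq_anchor (k := k) (m := n - m) (by omega) (k - 1) (by omega)
    exact ⟨a, s, has, .inr (by omega)⟩

end Anchor

theorem exists_perm_apply_eq {ι α : Type*} [Finite α] {u v : ι → α} (hu : Function.Injective u)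
    (hv : Function.Injective v) : ∃ σ : Perm α, ∀ i, σ (u i) = v i := by
  classical
  let e := (Equiv.ofInjective u hu).symm.trans (Equiv.ofInjective v hv)
  refine ⟨e.extendSubtype, fun i => ?_⟩
  rw [Equiv.extendSubtype_apply_of_mem e _ ⟨i, rfl⟩]
  simp [e]

theorem exists_perm_anchor_labeling {n k : ℕ} (h2k : 2 * k ≤ n) (hA : anchor k (k - 1) < n) :
    ∃ c : Perm (Fin n), (∀ x : Fin n, (x : ℕ) < k → (c x : ℕ) = x) ∧
      ∀ x : Fin n, ∀ t < k, (x : ℕ) = anchor k t → (c x : ℕ) = n - 1 - t := by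
  have hanchor (t : Fin k) : anchor k t < n := (monotone_anchor (by omega)).trans_lt hA
  let u : Fin k ⊕ Fin k → Fin n :=
    Sum.elim (fun a => ⟨a, by omega⟩) (fun t => ⟨anchor k t, hanchor t⟩)
  let v : Fin k ⊕ Fin k → Fin n :=
    Sum.elim (fun a => ⟨a, by omega⟩) (fun t => ⟨n - 1 - t, by omega⟩)
  have hu : Function.Injective u := by
    refine Function.Injective.sumElim (fun a b h => Fin.ext (by simpa using h))
      (fun s t h => Fin.ext (strictMonoOn_anchor.injOn s.isLt t.isLt (by simpa using h)))
      (fun a t h => ?_)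
    have := le_anchor (k := k) t
    simp only [Fin.ext_iff] at h
    omega
  have hv : Function.Injective v := by
    refine Function.Injective.sumElim (fun a b h => Fin.ext (by simpa using h))
      (fun s t h => Fin.ext ?_) (fun a t h => ?_) <;> simp only [Fin.ext_iff] at h <;> omega
  obtain ⟨c, hc⟩ := exists_perm_apply_eq hu hv
  refine ⟨c, fun x hx => ?_, fun x t ht hx => ?_⟩
  · simpa [u, v] using congrArg Fin.val (hc (.inl ⟨x, hx⟩))
  · obtain rfl : x = ⟨anchor k t, hanchor ⟨t, ht⟩⟩ := Fin.ext hx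
    simpa [u, v] using congrArg Fin.val (hc (.inr ⟨t, ht⟩))

theorem coe_finRotate_pow_apply {n : ℕ} [NeZero n] (m : ℕ) (i : Fin n) :
    ((finRotate n ^ m) i : ℕ) = (i + m) % n := by
  induction m with
  | zero => simp [Nat.mod_eq_of_lt i.isLt]
  | succ m ih => rw [pow_succ', Perm.mul_apply, finRotate_apply, Fin.val_add, ih, Fin.val_one',
      Nat.add_mod_mod, Nat.mod_add_mod, add_assoc]

theorem exists_isCycle_sub_le_wt_pow {n k : ℕ} (hn : 2 ≤ n) (hk₁ : k * k + 2 ≤ n + k)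
    (hk₂ : n ≤ k * k + k + 1) :
    ∃ f : Perm (Fin n), f.IsCycle ∧ f.support = univ ∧
      ∀ m, 0 < m → m < n → n - k ≤ wt (f ^ m) := by
  have h2k : 2 * k ≤ n := by nlinarith
  have hk : 1 ≤ k := by nlinarith
  have hA : anchor k (k - 1) < n := by
    have := two_mul_anchor_pred hk
    omega
  obtain ⟨c, hc_low, hc_high⟩ := exists_perm_anchor_labeling h2k hA
  have : NeZero n := ⟨by omega⟩
  refine ⟨c * finRotate n * c⁻¹, (isCycle_finRotate_of_le hn).conj,
    by rw [Perm.support_conj, support_finRotate_of_le hn, map_univ_equiv], fun m hm hmn => ?_⟩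
  have hwt_of (x : Fin n) (hx : n - k ≤ ((c ((finRotate n ^ m) x) : ℤ) - c x).natAbs) :
      n - k ≤ wt ((c * finRotate n * c⁻¹) ^ m) := by
    refine hx.trans (le_of_eq_of_le ?_ (natAbs_sub_le_wt _ (c x)))
    simp [conj_pow]
  obtain ⟨a, t, hat, hm_up | hm_wrap⟩ := exists_anchor_of_lt hk₂ hm hmn
  all_goals have hAt : anchor k t < n := (monotone_anchor (by omega)).trans_lt hA
  · let x : Fin n := ⟨a, by omega⟩
    have hy : ((finRotate n ^ m) x : ℕ) = anchor k t := by
      rw [coe_finRotate_pow_apply, Fin.val_mk, hm_up, Nat.mod_eq_of_lt hAt]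
    refine hwt_of x ?_
    rw [hc_high _ t (by omega) hy, hc_low x (by simp [x]; omega)]
    simp only [x]
    omega
  · let x : Fin n := ⟨anchor k t, hAt⟩
    have hy : ((finRotate n ^ m) x : ℕ) = a := by
      rw [coe_finRotate_pow_apply, Fin.val_mk, hm_wrap, Nat.add_mod_right,
        Nat.mod_eq_of_lt (by omega)]
    refine hwt_of x ?_
    rw [hc_low _ (by omega), hy, hc_high x t (by omega) rfl]
    omega

theorem natCeil_sqrt_bounds {n k : ℕ} (hn : 2 ≤ n)
    (hk : ⌈(Real.sqrt (4 * n - 3) - 1) / 2⌉₊ = k) : k * k + 2 ≤ n + k ∧ n ≤ k * k + k + 1 := by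
  set s := Real.sqrt (4 * n - 3)
  have hn' : (2 : ℝ) ≤ n := by exact_mod_cast hn
  have hs : 2 < s := Real.lt_sqrt_of_sq_lt (by linarith)
  have hs_sq : s ^ 2 = 4 * n - 3 := Real.sq_sqrt (by linarith)
  have hle : s ≤ 2 * k + 1 := by linarith [hk ▸ Nat.le_ceil ((s - 1) / 2)]
  have hlt : 2 * k - 1 < s := by
    linarith [hk ▸ Nat.ceil_lt_add_one (by linarith : 0 ≤ (s - 1) / 2)]
  constructor
  · have : (k : ℝ) * k + 1 < n + k := by nlinarith
    exact_mod_cast this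
  · have : (n : ℝ) ≤ k * k + k + 1 := by nlinarith
    exact_mod_cast this

/-- There is a transitive cyclic subgroup of `S_n` (generated by an `n`-cycle) whose
minimal ℓ∞-distance is at least `n - ⌈(√(4n-3) - 1)/2⌉`; moreover this is optimal:
every subgroup generated by an `n`-cycle has minimal distance at most this bound. -/
theorem cyclic_group_optimal_labeling (n : ℕ) (hn : 2 ≤ n) :
    (∃ f : Equiv.Perm (Fin n), f.IsCycle ∧ f.support = Finset.univ ∧
      ∀ g ∈ Subgroup.zpowers f, g ≠ 1 →
        (n : ℝ) - (⌈(Real.sqrt (4 * n - 3) - 1) / 2⌉₊ : ℝ) ≤ (wt g : ℝ)) ∧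
    (∀ f : Equiv.Perm (Fin n), f.IsCycle → f.support = Finset.univ →
      ∃ g ∈ Subgroup.zpowers f, g ≠ 1 ∧
        (wt g : ℝ) ≤ (n : ℝ) - (⌈(Real.sqrt (4 * n - 3) - 1) / 2⌉₊ : ℝ)) := by
  set k := ⌈(Real.sqrt (4 * n - 3) - 1) / 2⌉₊ with hk
  obtain ⟨hk₁, hk₂⟩ := natCeil_sqrt_bounds hn hk.symm
  have hcast : ((n - k : ℕ) : ℝ) = n - k := Nat.cast_sub (by nlinarith)
  refine ⟨?_, fun f hf hs => ?_⟩
  · obtain ⟨f, hf, hs, hwt⟩ := exists_isCycle_sub_le_wt_pow hn hk₁ hk₂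
    refine ⟨f, hf, hs, fun g hg hg₁ => ?_⟩
    obtain ⟨m, hm, rfl⟩ : ∃ m < n, f ^ m = g := by
      simpa [hf.orderOf_eq_of_support_eq_univ hs] using mem_zpowers_iff_mem_range_orderOf.1 hg
    have hm₀ : m ≠ 0 := by rintro rfl; exact hg₁ (pow_zero f)
    rw [← hcast]
    exact_mod_cast hwt m (Nat.pos_of_ne_zero hm₀) hm
  · obtain ⟨m, hm₀, hm, hwt⟩ := hf.exists_pow_wt_le hs hk₁
    refine ⟨f ^ m, Subgroup.pow_mem _ (Subgroup.mem_zpowers f) m,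
      pow_ne_one_of_lt_orderOf hm₀.ne' (by rwa [hf.orderOf_eq_of_support_eq_univ hs]), ?_⟩
    rw [← hcast]
    exact_mod_cast hwt
end

section
/- For any prime p with 3 ≤ p < 8 (i.e., p ∈ {3,5,7}) and any l ∈ S_p, the conjugated group l · AGL(p) · l^{-1} has minimal ℓ∞-distance at most (p−1)/2; hence the optimal relabeling distance of AGL(p) equals (p−1)/2 for these primes. -/
/-!
Only involutions are needed. Conjugated by `l`, the involution `x ↦ b - x` has ℓ∞-weight
`max_x |l (b - x) - l x|`. If this exceeds `m` for every `b`, then each `b` is the sum of some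
pair `(u, v)` with `l u + m < l v`, so there are at least `p` such pairs. Since `l` is a
bijection, they inject into the pairs `a + m < c` of representatives, of which there are only
`(p² - 1) / 8 < p` for `m = (p - 1) / 2` and `p < 8`.
-/

/-- The ℓ∞-weight of a permutation of `ZMod p`, using integer representatives. -/
def wtZ (p : ℕ) [NeZero p] (f : Equiv.Perm (ZMod p)) : ℕ :=
  Finset.univ.sup fun x : ZMod p => (((f x).val : ℤ) - ((x).val : ℤ)).natAbs

/-- `f` is an affine permutation `x ↦ a x + b` with `a ≠ 0`, i.e. an element of `AGL(p)`. -/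
def IsAffine (p : ℕ) (f : Equiv.Perm (ZMod p)) : Prop :=
  ∃ a b : ZMod p, a ≠ 0 ∧ ∀ x : ZMod p, f x = a * x + b

open Finset

/-- Representatives `(a, c)` of the pairs of residues mod `p` with `c` more than `m` above `a`. -/
def farPairs (p m : ℕ) : Finset (ℕ × ℕ) :=
  (range p ×ˢ range p).filter fun ac => ac.1 + m < ac.2

lemma wtZ_le_iff {p : ℕ} [NeZero p] {f : Equiv.Perm (ZMod p)} {m : ℕ} :
    wtZ p f ≤ m ↔ ∀ x, (((f x).val : ℤ) - (x.val : ℤ)).natAbs ≤ m := by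
  simp [wtZ, Finset.sup_le_iff]

lemma wtZ_conj_subLeft_le_iff {p : ℕ} [NeZero p] (l : Equiv.Perm (ZMod p)) (b : ZMod p)
    {m : ℕ} :
    wtZ p (l * Equiv.subLeft b * l⁻¹) ≤ m ↔
      ∀ x, (((l (b - x)).val : ℤ) - ((l x).val : ℤ)).natAbs ≤ m := by
  rw [wtZ_le_iff, l.symm.forall_congr_left]
  simp [Equiv.Perm.mul_apply]

lemma isAffine_subLeft {p : ℕ} [Fact (1 < p)] (b : ZMod p) :
    IsAffine p (Equiv.subLeft b) :=
  ⟨-1, b, neg_ne_zero.mpr one_ne_zero, fun x => by rw [Equiv.subLeft_apply]; ring⟩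

lemma Equiv.subLeft_ne_one {R : Type*} [Ring R] (h2 : (2 : R) ≠ 0) (b : R) :
    Equiv.subLeft b ≠ 1 := by
  intro h
  have h0 : b - 0 = 0 := congrFun (congrArg DFunLike.coe h) 0
  have h1 : b - 1 = 1 := congrFun (congrArg DFunLike.coe h) 1
  rw [sub_zero] at h0
  rw [h0, zero_sub] at h1
  apply h2
  rw [← one_add_one_eq_two]
  nth_rw 1 [← h1]
  exact neg_add_cancel 1

lemma ZMod.two_ne_zero_of_two_lt {p : ℕ} (hp : 2 < p) : (2 : ZMod p) ≠ 0 := fun h => by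
  simpa [h] using ZMod.val_ofNat_of_lt (n := p) (a := 2) hp

lemma exists_conj_subLeft_wtZ_le {p : ℕ} [NeZero p] {m : ℕ} (hcard : #(farPairs p m) < p)
    (l : Equiv.Perm (ZMod p)) :
    ∃ b : ZMod p, wtZ p (l * Equiv.subLeft b * l⁻¹) ≤ m := by
  simp_rw [wtZ_conj_subLeft_le_iff]
  by_contra! hbad
  set S := univ.filter fun uv : ZMod p × ZMod p => (l uv.1).val + m < (l uv.2).val
  have hS : #S ≤ #(farPairs p m) := by
    refine card_le_card_of_injOn (fun uv => ((l uv.1).val, (l uv.2).val)) ?_ ?_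
    · intro uv huv
      simp_all [S, farPairs, ZMod.val_lt]
    · intro uv _ uv' _ h
      simp only [Prod.mk.injEq, ZMod.val_injective p |>.eq_iff, l.injective.eq_iff] at h
      exact Prod.ext h.1 h.2
  have hsurj :
      Set.SurjOn (fun uv : ZMod p × ZMod p => uv.1 + uv.2) S (univ : Finset (ZMod p)) := by
    intro b _
    obtain ⟨x, hx⟩ := hbad b
    rcases le_or_gt (l x).val (l (b - x)).val with h | h
    · exact ⟨(x, b - x), by simp only [S, mem_coe, mem_filter, mem_univ, true_and]; omega,
        add_sub_cancel x b⟩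
    · exact ⟨(b - x, x), by simp only [S, mem_coe, mem_filter, mem_univ, true_and]; omega,
        sub_add_cancel b x⟩
  have := card_le_card_of_surjOn _ hsurj
  simp only [card_univ, ZMod.card] at this
  omega

-- For odd `p`, `farPairs p ((p - 1) / 2)` has `(p² - 1) / 8` elements.
lemma card_farPairs_half_lt {p : ℕ} (hp : p.Prime) (h3 : 3 ≤ p) (h8 : p < 8) :
    #(farPairs p ((p - 1) / 2)) < p := by
  interval_cases p
  all_goals first | (norm_num at hp; done) | decide

/-- For any prime `3 ≤ p < 8` and any labeling `l`, the conjugated group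
`l AGL(p) l⁻¹` has minimal ℓ∞-distance at most `(p-1)/2`; hence the optimal
relabeling distance of `AGL(p)` is `(p-1)/2` for these primes. -/
theorem agl_small_primes_optimal (p : ℕ) [NeZero p] (hp : p.Prime)
    (h3 : 3 ≤ p) (h8 : p < 8) (l : Equiv.Perm (ZMod p)) :
    ∃ f : Equiv.Perm (ZMod p), IsAffine p f ∧ f ≠ 1 ∧
      wtZ p (l * f * l⁻¹) ≤ (p - 1) / 2 := by
  have : Fact (1 < p) := ⟨by omega⟩
  obtain ⟨b, hb⟩ := exists_conj_subLeft_wtZ_le (card_farPairs_half_lt hp h3 h8) l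
  exact ⟨Equiv.subLeft b, isAffine_subLeft b,
    Equiv.subLeft_ne_one (ZMod.two_ne_zero_of_two_lt (by omega)) b, hb⟩
end

section
/- For every n ≥ 37, there exists a labeling l ∈ S_n such that the conjugated dihedral group l · D_n · l^{-1} has minimal ℓ∞-distance at least n − 2n·√(ln(2n+2)/(n/2−1)) − √(n·ln(2n+2)/2), i.e., n − O(√(n ln n)); moreover every labeling yields minimal distance at most n − ⌈(√(4n−3)−1)/2⌉. -/
/-- The dihedral group of order `2n` in its natural labeling: the subgroup of `S_n`
generated by the `n`-cycle `i ↦ i+1` and the reflection `i ↦ n-1-i` (0-based). -/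
def dihedralSubgroup (n : ℕ) : Subgroup (Equiv.Perm (Fin n)) :=
  Subgroup.closure {finRotate n, Fin.revPerm}

open Finset Equiv Real

namespace Fin

variable {n : ℕ} [NeZero n]

theorem finRotate_eq_addRight_one : finRotate n = Equiv.addRight 1 := by
  ext i : 1
  simp

theorem revPerm_eq_subLeft_neg_one : (revPerm : Perm (Fin n)) = Equiv.subLeft (-1) := by
  obtain ⟨k, rfl⟩ := Nat.exists_eq_add_one_of_ne_zero (NeZero.ne n)
  ext i : 1
  simp [← last_sub, eq_neg_iff_add_eq_zero]

end Fin

section Dihedral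

variable {n : ℕ} [NeZero n]

theorem addRight_mem_dihedralSubgroup (a : Fin n) : Equiv.addRight a ∈ dihedralSubgroup n := by
  have hpow : ∀ k : ℕ, finRotate n ^ k = Equiv.addRight (k • 1) := fun k => by
    induction k with
    | zero => simp
    | succ k ih => rw [pow_succ', ih, succ_nsmul, addRight_add, Fin.finRotate_eq_addRight_one]
  have ha : a.val • (1 : Fin n) = a := by
    open Fin.NatCast in rw [nsmul_one, Fin.cast_val_eq_self]
  rw [← ha, ← hpow]
  exact pow_mem (Subgroup.subset_closure (Set.mem_insert _ _)) _

theorem exists_eq_addRight_or_subLeft_of_mem_dihedralSubgroup {g : Perm (Fin n)}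
    (hg : g ∈ dihedralSubgroup n) : ∃ a, g = Equiv.addRight a ∨ g = Equiv.subLeft a := by
  induction hg using Subgroup.closure_induction with
  | mem g hg =>
    rcases hg with rfl | rfl
    · exact ⟨1, .inl Fin.finRotate_eq_addRight_one⟩
    · exact ⟨-1, .inr Fin.revPerm_eq_subLeft_neg_one⟩
  | one => exact ⟨0, .inl addRight_zero.symm⟩
  | mul g h _ _ hg hh =>
    obtain ⟨a, rfl | rfl⟩ := hg <;> obtain ⟨b, rfl | rfl⟩ := hh <;>
      [refine ⟨b + a, .inl ?_⟩; refine ⟨b + a, .inr ?_⟩;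
        refine ⟨a - b, .inr ?_⟩; refine ⟨a - b, .inl ?_⟩] <;>
    · ext i : 1
      simp only [Perm.mul_apply, coe_addRight, subLeft_apply]
      abel
  | inv g _ hg =>
    obtain ⟨a, rfl | rfl⟩ := hg
    · exact ⟨-a, .inl (by ext i : 1; simp)⟩
    · exact ⟨a, .inr (by ext i : 1; simp; abel)⟩

end Dihedral

section LowerBound

def Crosses {α : Type*} (L H : Finset α) (g : Perm α) : Prop :=
  ∃ x, (x ∈ L ∧ g x ∈ H) ∨ (x ∈ H ∧ g x ∈ L)

variable {n : ℕ}

theorem exists_perm_lt_card_and_le {L H : Finset (Fin n)} (hLH : Disjoint L H) :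
    ∃ l : Perm (Fin n), (∀ x ∈ L, (l x : ℕ) < #L) ∧ ∀ x ∈ H, n - #H ≤ l x := by
  -- `l` sorts the positions by the key `L < (L ∪ H)ᶜ < H`
  let key : Fin n → ℕ := fun x => if x ∈ L then 0 else if x ∈ H then 2 else 1
  have hkeyL : ∀ x, x ∈ L ↔ key x ≤ 0 := fun x => by
    by_cases hL : x ∈ L <;> by_cases hH : x ∈ H <;> simp [key, hL, hH]
  have hkeyH : ∀ x, x ∈ H ↔ 2 ≤ key x := fun x => by
    by_cases hL : x ∈ L
    · simp [key, hL, disjoint_left.mp hLH hL]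
    · by_cases hH : x ∈ H <;> simp [key, hL, hH]
  set σ := Tuple.sort key
  have hmono : ∀ {i j}, i ≤ j → key (σ i) ≤ key (σ j) := fun h =>
    Tuple.monotone_sort key h
  refine ⟨σ⁻¹, fun x hx => ?_, fun x hx => ?_⟩
  · have hL : ∀ i ∈ Iic (σ⁻¹ x), σ i ∈ L := fun i hi => by
      rw [hkeyL] at hx ⊢
      exact (hmono (mem_Iic.mp hi)).trans (by simpa using hx)
    have := card_le_card_of_injOn σ hL σ.injective.injOn
    rw [Fin.card_Iic] at this
    omega
  · have hH : ∀ i ∈ Ici (σ⁻¹ x), σ i ∈ H := fun i hi => by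
      rw [hkeyH] at hx ⊢
      exact (by simpa using hx : 2 ≤ key (σ (σ⁻¹ x))).trans (hmono (mem_Ici.mp hi))
    have := card_le_card_of_injOn σ hH σ.injective.injOn
    rw [Fin.card_Ici] at this
    omega

theorem natAbs_sub_le_wt_conj (l g : Perm (Fin n)) (x : Fin n) :
    ((l (g x) : ℤ) - l x).natAbs ≤ wt (l * g * l⁻¹) := by
  have h := le_sup (f := fun i => (((l * g * l⁻¹) i : ℤ) - i).natAbs) (mem_univ (l x))
  simpa only [wt, Perm.mul_apply, Perm.coe_inv, symm_apply_apply] using h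

theorem exists_perm_forall_crosses_le_wt_conj {L H : Finset (Fin n)} (hLH : Disjoint L H) :
    ∃ l : Perm (Fin n), ∀ g, Crosses L H g → n + 1 ≤ wt (l * g * l⁻¹) + #L + #H := by
  obtain ⟨l, hL, hH⟩ := exists_perm_lt_card_and_le hLH
  refine ⟨l, fun g ⟨x, hx⟩ => ?_⟩
  have := natAbs_sub_le_wt_conj l g x
  rcases hx with ⟨hxL, hgx⟩ | ⟨hxH, hgx⟩
  · have := hL x hxL; have := hH _ hgx; omega
  · have := hH x hxH; have := hL _ hgx; omega

def lowPositions (n s : ℕ) : Finset (Fin n) := {j | j.val < s ∨ j.val = s + 1}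

def highPositions (n s : ℕ) : Finset (Fin n) :=
  {j | (j.val ≠ 0 ∧ s ∣ j.val) ∨ n ≤ j.val + s + 1}

variable {s : ℕ}

theorem disjoint_lowPositions_highPositions (hs : 2 ≤ s) (hn : 2 * s + 3 ≤ n) :
    Disjoint (lowPositions n s) (highPositions n s) := by
  simp only [disjoint_left, lowPositions, highPositions, mem_filter, mem_univ, true_and]
  rintro j (hj | hj) (⟨hj0, k, hk⟩ | hj')
  · rcases k with _ | k
    · omega
    · nlinarith
  · omega
  · rcases k with _ | _ | k
    · omega
    · omega
    · nlinarith
  · omega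

theorem card_lowPositions_le : #(lowPositions n s) ≤ s + 1 := by
  calc #(lowPositions n s) ≤ #(insert (s + 1) (range s)) := by
        refine card_le_card_of_injOn Fin.val (fun j hj => ?_) Fin.val_injective.injOn
        simp only [mem_coe, lowPositions, mem_filter, mem_univ, true_and] at hj
        simp only [mem_coe, mem_insert, mem_range]
        omega
    _ ≤ s + 1 := by grw [card_insert_le, card_range]

theorem card_highPositions_le : #(highPositions n s) ≤ (n - 1) / s + (s + 1) := by
  calc #(highPositions n s) ≤ #({x ∈ Ioc 0 (n - 1) | s ∣ x} ∪ Ico (n - (s + 1)) n) := by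
        refine card_le_card_of_injOn Fin.val (fun j hj => ?_) Fin.val_injective.injOn
        have := j.isLt
        simp only [mem_coe, highPositions, mem_filter, mem_univ, true_and] at hj
        simp only [mem_coe, mem_union, mem_filter, mem_Ioc, mem_Ico]
        omega
    _ ≤ (n - 1) / s + (s + 1) := by
        grw [card_union_le, Nat.Ioc_filter_dvd_card_eq_div, Nat.card_Ico]
        omega

theorem crosses_subLeft [NeZero n] (hs : 2 ≤ s) (hn : 2 * s + 3 ≤ n) (a : Fin n) :
    Crosses (lowPositions n s) (highPositions n s) (Equiv.subLeft a) := by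
  simp only [Crosses, lowPositions, highPositions, mem_filter, mem_univ, true_and,
    subLeft_apply]
  by_cases ha : a.val < s
  · refine ⟨⟨s + 1, by omega⟩, .inl ⟨.inr rfl, .inr ?_⟩⟩
    rw [Fin.val_sub, Nat.mod_eq_of_lt (by simp only; omega)]
    simp only
    omega
  · have hmod := Nat.mod_lt a.val (by omega : 0 < s)
    refine ⟨⟨a.val % s, by omega⟩, .inl ⟨.inl hmod, .inl ⟨?_, ?_⟩⟩⟩ <;>
      rw [Fin.sub_val_of_le (Fin.le_def.mpr (Nat.mod_le _ _))]
    · dsimp only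
      omega
    · exact Nat.dvd_sub_mod _

theorem crosses_addRight [NeZero n] (hs : 2 ≤ s) (hn : 2 * s + 3 ≤ n) {a : Fin n}
    (ha : a ≠ 0) : Crosses (lowPositions n s) (highPositions n s) (Equiv.addRight a) := by
  have ha' : a.val ≠ 0 := Fin.val_ne_iff.mpr ha
  simp only [Crosses, lowPositions, highPositions, mem_filter, mem_univ, true_and,
    coe_addRight]
  by_cases has : a.val + s ≤ n
  · -- `s * q` is the least multiple of `s` that is at least `a`
    obtain ⟨q, r, hqr, hr⟩ : ∃ q r, s * q + r = a.val + s - 1 ∧ r < s :=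
      ⟨_, _, Nat.div_add_mod _ s, Nat.mod_lt _ (by omega)⟩
    refine ⟨⟨s * q - a.val, by omega⟩, .inl ⟨.inl (by simp only; omega), .inl ?_⟩⟩
    rw [Fin.val_add, Nat.mod_eq_of_lt (by simp only; omega)]
    simp only
    exact ⟨by omega, by rw [Nat.sub_add_cancel (by omega)]; exact dvd_mul_right s q⟩
  · refine ⟨⟨s, by omega⟩, .inr ⟨.inl ⟨by simp only; omega, dvd_rfl⟩, .inl ?_⟩⟩
    rw [Fin.val_add, Nat.mod_eq_sub_mod (by simp only; omega),
      Nat.mod_eq_of_lt (by simp only; omega)]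
    simp only
    omega

theorem crosses_of_mem_dihedralSubgroup [NeZero n] (hs : 2 ≤ s) (hn : 2 * s + 3 ≤ n)
    {g : Perm (Fin n)} (hg : g ∈ dihedralSubgroup n) (hg1 : g ≠ 1) :
    Crosses (lowPositions n s) (highPositions n s) g := by
  obtain ⟨a, rfl | rfl⟩ := exists_eq_addRight_or_subLeft_of_mem_dihedralSubgroup hg
  · exact crosses_addRight hs hn (by rintro rfl; exact hg1 addRight_zero)
  · exact crosses_subLeft hs hn a

theorem exists_perm_forall_dihedral_le_wt_conj [NeZero n] (hs : 2 ≤ s) (hn : 2 * s + 3 ≤ n) :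
    ∃ l : Perm (Fin n), ∀ g ∈ dihedralSubgroup n, g ≠ 1 →
      n ≤ wt (l * g * l⁻¹) + 2 * s + 1 + (n - 1) / s := by
  obtain ⟨l, hl⟩ :=
    exists_perm_forall_crosses_le_wt_conj (disjoint_lowPositions_highPositions hs hn)
  refine ⟨l, fun g hg hg1 => ?_⟩
  have := hl g (crosses_of_mem_dihedralSubgroup hs hn hg hg1)
  have := card_lowPositions_le (n := n) (s := s)
  have := card_highPositions_le (n := n) (s := s)
  omega

theorem four_mul_sqrt_le_two_mul_sqrt_log_div (hn : 3 ≤ n) :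
    4 * √n ≤ 2 * n * √(log (2 * n + 2) / (n / 2 - 1)) := by
  have hn' : (3 : ℝ) ≤ n := by exact_mod_cast hn
  have hlog : 2 ≤ log (2 * n + 2) := by
    rw [le_log_iff_exp_le (by positivity), show (2 : ℝ) = 1 + 1 by norm_num, exp_add]
    nlinarith [exp_one_lt_d9, exp_pos 1]
  have hratio : 4 / n ≤ log (2 * n + 2) / (n / 2 - 1) := by
    calc (4 : ℝ) / n = 2 / (n / 2) := by field_simp; ring
      _ ≤ log (2 * n + 2) / (n / 2 - 1) :=
        div_le_div₀ (by linarith) hlog (by linarith) (by linarith)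
  calc 4 * √n = 2 * n * √(4 / n) := by
        rw [sqrt_div' _ (by positivity), show (4 : ℝ) = 2 ^ 2 by norm_num, sqrt_sq (by norm_num)]
        field_simp
        rw [sq_sqrt (by positivity)]
    _ ≤ 2 * n * √(log (2 * n + 2) / (n / 2 - 1)) := by gcongr

theorem exists_perm_forall_dihedral_le_wt_conj_add_four_mul_sqrt [NeZero n] (hn : 9 ≤ n) :
    ∃ l : Perm (Fin n), ∀ g ∈ dihedralSubgroup n, g ≠ 1 →
      (n : ℝ) ≤ wt (l * g * l⁻¹) + 4 * √n := by
  set s := Nat.sqrt n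
  have hs : 3 ≤ s := Nat.le_sqrt.mpr (by omega)
  have hdiv : (n - 1) / s ≤ s + 2 := by
    refine Nat.div_le_of_le_mul ?_
    have : n < (s + 1) * (s + 1) := Nat.lt_succ_sqrt n
    have : s * (s + 2) + 1 = (s + 1) * (s + 1) := by ring
    omega
  obtain ⟨l, hl⟩ := exists_perm_forall_dihedral_le_wt_conj (n := n) (s := s) (by omega)
    (by nlinarith [Nat.sqrt_le n])
  refine ⟨l, fun g hg hg1 => ?_⟩
  have hwt : (n : ℝ) ≤ wt (l * g * l⁻¹) + 3 * s + 3 := by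
    exact_mod_cast (show n ≤ wt (l * g * l⁻¹) + 3 * s + 3 by have := hl g hg hg1; omega)
  have hsn : (s : ℝ) ≤ √n := nat_sqrt_le_real_sqrt
  have h3 : (3 : ℝ) ≤ √n := le_sqrt_of_sq_le (by norm_cast)
  linarith

end LowerBound

section UpperBound

variable {n : ℕ}

theorem card_far_pairs_le {m : ℕ} (hm : 2 * m ≤ n + 1) :
    #{p : Fin n × Fin n | n - m < ((p.1 : ℤ) - p.2).natAbs} ≤ m * m - m := by
  -- folding the top `m` values onto the bottom ones sends far pairs off the diagonal
  let fold : ℕ → ℕ := fun x => if x < m then x else x - (n - m)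
  calc _ ≤ #(range m).offDiag := by
        refine card_le_card_of_injOn (fun p => (fold p.1, fold p.2)) ?_ ?_
        · rintro ⟨x, y⟩ h
          simp only [coe_filter, mem_univ, true_and, Set.mem_ofPred_eq] at h
          simp only [coe_offDiag, coe_range, Set.mem_offDiag, Set.mem_Iio]
          have := x.isLt; have := y.isLt
          simp only [fold]; split_ifs <;> omega
        · rintro ⟨x, y⟩ h ⟨x', y'⟩ h' hxy
          simp only [coe_filter, mem_univ, true_and, Set.mem_ofPred_eq] at h h'
          simp only [Prod.mk.injEq, fold] at hxy
          have := x.isLt; have := y.isLt; have := x'.isLt; have := y'.isLt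
          simp only [Prod.mk.injEq, Fin.ext_iff]
          split_ifs at hxy <;> omega
    _ = m * m - m := by rw [offDiag_card, card_range]

theorem exists_ne_zero_wt_conj_addRight_le [NeZero n] (l : Perm (Fin n)) {m : ℕ}
    (hm : m * m - m < n - 1) : ∃ a ≠ 0, wt (l * Equiv.addRight a * l⁻¹) + m ≤ n := by
  have hmn : 2 * m ≤ n + 1 := by
    rcases Nat.lt_or_ge m 3 with h | h
    · interval_cases m <;> omega
    · have : 2 * m ≤ m * m - m := by rw [Nat.le_sub_iff_add_le (Nat.le_mul_self m)]; nlinarith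
      omega
  set far := ({p : Fin n × Fin n | n - m < ((p.1 : ℤ) - p.2).natAbs} : Finset _)
  set bad := ({a : Fin n | ∃ x, n - m < ((l (x + a) : ℤ) - l x).natAbs} : Finset _)
  have hbad : bad ⊆ far.image fun p => l⁻¹ p.1 - l⁻¹ p.2 := by
    intro a ha
    obtain ⟨x, hx⟩ := (mem_filter.mp ha).2
    exact mem_image.mpr ⟨(l (x + a), l x), by simpa [far] using hx, by simp⟩
  have hcard : #bad < #(univ.erase (0 : Fin n)) := by
    grw [card_erase_of_mem (mem_univ 0), card_univ, Fintype.card_fin, hbad, card_image_le,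
      card_far_pairs_le hmn]
    exact hm
  obtain ⟨a, ha0, ha⟩ := exists_mem_notMem_of_card_lt_card hcard
  refine ⟨a, ne_of_mem_erase ha0, ?_⟩
  have hgood : ∀ x, ((l (x + a) : ℤ) - l x).natAbs ≤ n - m := fun x => by
    by_contra h
    exact ha (mem_filter.mpr ⟨mem_univ a, x, by omega⟩)
  have : wt (l * Equiv.addRight a * l⁻¹) ≤ n - m := by
    refine Finset.sup_le fun i _ => ?_
    simpa only [Perm.mul_apply, coe_addRight, Perm.coe_inv, apply_symm_apply] using
      hgood (l⁻¹ i)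
  omega

theorem mul_self_sub_lt_of_lt_sqrt (hn : 2 ≤ n) {m : ℕ}
    (hm : (m : ℝ) < (√(4 * n - 3) - 1) / 2 + 1) : m * m - m < n - 1 := by
  rcases Nat.eq_zero_or_pos m with rfl | hm0
  · omega
  have hm1 : (1 : ℝ) ≤ m := by exact_mod_cast hm0
  have h : ((2 * m - 1 : ℝ)) ^ 2 < 4 * n - 3 := (lt_sqrt (by linarith)).mp (by linarith)
  have h' : m * m + 1 < n + m := by
    have : (m : ℝ) * m + 1 < n + m := by nlinarith
    exact_mod_cast this
  omega

end UpperBound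

/-- For `n ≥ 37` the dihedral group `D_n` has a labeling with minimal ℓ∞-distance at
least `n - 2n√(ln(2n+2)/(n/2-1)) - √(n ln(2n+2)/2)`, i.e. `n - O(√(n ln n))`; moreover
every labeling gives minimal distance at most `n - ⌈(√(4n-3)-1)/2⌉`. -/
theorem dihedral_labeling_bounds (n : ℕ) (hn : 37 ≤ n) :
    (∃ l : Equiv.Perm (Fin n), ∀ g ∈ dihedralSubgroup n, g ≠ 1 →
      (n : ℝ) - 2 * n * Real.sqrt (Real.log (2 * n + 2) / ((n : ℝ) / 2 - 1)) -
        Real.sqrt (n * Real.log (2 * n + 2) / 2) ≤ (wt (l * g * l⁻¹) : ℝ)) ∧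
    (∀ l : Equiv.Perm (Fin n), ∃ g ∈ dihedralSubgroup n, g ≠ 1 ∧
      (wt (l * g * l⁻¹) : ℝ) ≤ (n : ℝ) - (⌈(Real.sqrt (4 * n - 3) - 1) / 2⌉₊ : ℝ)) := by
  have : NeZero n := ⟨by omega⟩
  constructor
  · obtain ⟨l, hl⟩ :=
      exists_perm_forall_dihedral_le_wt_conj_add_four_mul_sqrt (n := n) (by omega)
    refine ⟨l, fun g hg hg1 => ?_⟩
    have := hl g hg hg1
    have := four_mul_sqrt_le_two_mul_sqrt_log_div (n := n) (by omega)
    have := sqrt_nonneg (n * log (2 * n + 2) / 2)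
    linarith
  · intro l
    have hx : 0 ≤ (√(4 * n - 3) - 1) / 2 := by
      have : (37 : ℝ) ≤ n := by exact_mod_cast hn
      have : (1 : ℝ) ≤ √(4 * n - 3) := one_le_sqrt.mpr (by linarith)
      linarith
    obtain ⟨a, ha, hwt⟩ := exists_ne_zero_wt_conj_addRight_le l
      (mul_self_sub_lt_of_lt_sqrt (by omega) (Nat.ceil_lt_add_one hx))
    refine ⟨_, addRight_mem_dihedralSubgroup a, fun h => ha ?_, ?_⟩
    · simpa using congrArg (· 0) h
    · rw [le_sub_iff_add_le]
      exact_mod_cast hwt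
end
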